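/- arXiv:1601.03451 — 6 statements merged into one kernel-verified Lean document; each statement's English description precedes it below -/
import Mathlib

section
/- Let n ≥ 2. Identify the F_2-vector space V_n with the power set of {1,…,n} under symmetric difference, and let W_n := V_n / {∅, {1,…,n}} be the quotient by the subgroup generated by the full set. The symmetric group S_n acts on W_n by permuting elements. Then every 1-cocycle ξ : S_n → W_n whose restriction to each subgroup generated by an adjacent transposition (t, t+1) is a coboundary is itself a coboundary; equivalently, H^1_*(S_n, W_n) = 0 where * denotes classes trivial on all cyclic subgroups. -/
/-!
Subtracting a coboundary `δm` from a cocycle modulo a permutation-stable `U` leaves a cocycle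
modulo `U`, and such a cocycle lies in `U` on all of `S_n` as soon as it does on the adjacent
transpositions, which generate `S_n` as a monoid.
On a transposition `(i j)` the coboundary `δm` depends only on `m j - m i`, so the local
potentials `mₐ` glue to the single potential `m i = ∑_{a < i} (mₐ (a + 1) - mₐ a)`.
-/

open Equiv

section Cocycle

variable {α R M : Type*} [Ring R] [AddCommGroup M] [Module R M]

def IsCocycleMod (U : Submodule R (α → M)) (ξ : Perm α → α → M) : Prop :=
  ∀ g h, ξ (g * h) - ((fun i => ξ h (g⁻¹ i)) + ξ g) ∈ U

def coboundary (m : α → M) (g : Perm α) : α → M :=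
  (fun i => m (g⁻¹ i)) - m

theorem coboundary_mul (m : α → M) (g h : Perm α) :
    coboundary m (g * h) = (fun i => coboundary m h (g⁻¹ i)) + coboundary m g := by
  funext i
  simp only [coboundary, mul_inv_rev, Perm.mul_apply, Pi.add_apply, Pi.sub_apply]
  abel

theorem coboundary_swap_eq_of_sub_eq [DecidableEq α] {m m' : α → M} {i j : α}
    (h : m j - m i = m' j - m' i) : coboundary m (swap i j) = coboundary m' (swap i j) := by
  funext k
  simp only [coboundary, swap_inv, Pi.sub_apply]
  rcases eq_or_ne k i with rfl | hki
  · simpa only [swap_apply_left] using h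
  rcases eq_or_ne k j with rfl | hkj
  · simpa only [swap_apply_right, neg_sub] using congrArg Neg.neg h
  simp only [swap_apply_of_ne_of_ne hki hkj, sub_self]

namespace IsCocycleMod

variable {U : Submodule R (α → M)} {ξ : Perm α → α → M}

theorem map_one_mem (hξ : IsCocycleMod U ξ) : ξ 1 ∈ U := by
  have h := U.neg_mem (hξ 1 1)
  simp only [mul_one, inv_one, Perm.one_apply] at h
  convert h using 1
  abel

theorem sub_coboundary (hξ : IsCocycleMod U ξ) (m : α → M) :
    IsCocycleMod U fun g => ξ g - coboundary m g := by
  intro g h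
  convert hξ g h using 1
  simp only [coboundary_mul]
  funext i
  simp only [Pi.sub_apply, Pi.add_apply]
  abel

theorem mem_of_mem_closure (hU : ∀ (g : Perm α) v, v ∈ U → (fun i => v (g i)) ∈ U)
    (hξ : IsCocycleMod U ξ) {S : Set (Perm α)} (hS : ∀ s ∈ S, ξ s ∈ U) {g : Perm α}
    (hg : g ∈ Submonoid.closure S) : ξ g ∈ U := by
  induction hg using Submonoid.closure_induction with
  | mem s hs => exact hS s hs
  | one => exact hξ.map_one_mem
  | mul x y _ _ hx hy =>
    have h := U.add_mem (hξ x y) (U.add_mem (hU x⁻¹ _ hy) hx)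
    rwa [sub_add_cancel] at h

end IsCocycleMod

theorem comp_mem_span_const {c : M} {v : α → M} (hv : v ∈ Submodule.span R {fun _ => c})
    (σ : α → α) : (fun i => v (σ i)) ∈ Submodule.span R {fun _ => c} := by
  obtain ⟨r, rfl⟩ := Submodule.mem_span_singleton.mp hv
  exact Submodule.mem_span_singleton.mpr ⟨r, rfl⟩

end Cocycle

theorem Fin.exists_adjacent_sub_eq {M : Type*} [AddCommGroup M] {n : ℕ}
    (d : ∀ a, a + 1 < n → M) :
    ∃ m : Fin n → M, ∀ a (ha : a + 1 < n), m ⟨a + 1, ha⟩ - m ⟨a, by omega⟩ = d a ha := by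
  classical
  refine ⟨fun i => ∑ a ∈ Finset.range i, if ha : a + 1 < n then d a ha else 0, fun a ha => ?_⟩
  simp only [Finset.sum_range_succ_sub_sum, dif_pos ha]

theorem Fin.mclosure_adjacent_swaps (n : ℕ) :
    Submonoid.closure
      {g : Perm (Fin n) | ∃ a, ∃ ha : a + 1 < n, g = swap ⟨a, by omega⟩ ⟨a + 1, ha⟩} = ⊤ := by
  rcases n with _ | k
  · exact Subsingleton.elim _ _
  rw [eq_top_iff, ← Perm.mclosure_swap_castSucc_succ k, Submonoid.closure_le]
  rintro _ ⟨i, rfl⟩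
  exact Submonoid.subset_closure ⟨i, by simp [i.isLt], rfl⟩

theorem stmt_1_general (n : ℕ)
    (U : Submodule (ZMod 2) (Fin n → ZMod 2))
    (hU : U = Submodule.span (ZMod 2) {(fun _ => 1 : Fin n → ZMod 2)})
    (ξ : Equiv.Perm (Fin n) → (Fin n → ZMod 2))
    (hcoc : ∀ g h : Equiv.Perm (Fin n),
      ξ (g * h) - ((fun i => ξ h (g⁻¹ i)) + ξ g) ∈ U)
    (hloc : ∀ (a : ℕ) (ha : a + 1 < n), ∃ m : Fin n → ZMod 2,
      ∀ x ∈ Subgroup.zpowers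
          (Equiv.swap (⟨a, Nat.lt_of_succ_lt ha⟩ : Fin n) (⟨a + 1, ha⟩ : Fin n)),
        ξ x - ((fun i => m (x⁻¹ i)) - m) ∈ U) :
    ∃ m : Fin n → ZMod 2, ∀ g : Equiv.Perm (Fin n),
      ξ g - ((fun i => m (g⁻¹ i)) - m) ∈ U := by
  choose mloc hmloc using hloc
  obtain ⟨m, hm⟩ := Fin.exists_adjacent_sub_eq fun a ha =>
    mloc a ha ⟨a + 1, ha⟩ - mloc a ha ⟨a, Nat.lt_of_succ_lt ha⟩
  have hUperm : ∀ (g : Perm (Fin n)) v, v ∈ U → (fun i => v (g i)) ∈ U := by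
    subst hU
    exact fun g _ hv => comp_mem_span_const hv g
  have hξ : IsCocycleMod U ξ := hcoc
  refine ⟨m, fun g => (hξ.sub_coboundary m).mem_of_mem_closure hUperm ?_
    (Fin.mclosure_adjacent_swaps n ▸ Submonoid.mem_top g)⟩
  rintro _ ⟨a, ha, rfl⟩
  rw [coboundary_swap_eq_of_sub_eq (hm a ha)]
  exact hmloc a ha _ (Subgroup.mem_zpowers _)

/-- `W_n` is the F₂-space of subsets of `{1,…,n}` (encoded as `Fin n → ZMod 2`)
modulo the span `U` of the full set. Every 1-cocycle `ξ : S_n → W_n` (encoded as a map to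
`Fin n → ZMod 2` satisfying the cocycle identity modulo `U`) whose restriction to each
subgroup generated by an adjacent transposition is a coboundary is itself a coboundary. -/
theorem stmt_1 (n : ℕ) (hn : 2 ≤ n)
    (U : Submodule (ZMod 2) (Fin n → ZMod 2))
    (hU : U = Submodule.span (ZMod 2) {(fun _ => 1 : Fin n → ZMod 2)})
    (ξ : Equiv.Perm (Fin n) → (Fin n → ZMod 2))
    (hcoc : ∀ g h : Equiv.Perm (Fin n),
      ξ (g * h) - ((fun i => ξ h (g⁻¹ i)) + ξ g) ∈ U)
    (hloc : ∀ (a : ℕ) (ha : a + 1 < n), ∃ m : Fin n → ZMod 2,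
      ∀ x ∈ Subgroup.zpowers
          (Equiv.swap (⟨a, Nat.lt_of_succ_lt ha⟩ : Fin n) (⟨a + 1, ha⟩ : Fin n)),
        ξ x - ((fun i => m (x⁻¹ i)) - m) ∈ U) :
    ∃ m : Fin n → ZMod 2, ∀ g : Equiv.Perm (Fin n),
      ξ g - ((fun i => m (g⁻¹ i)) - m) ∈ U :=
  stmt_1_general n U hU ξ hcoc hloc
end

section
/- Let G' be a finite group with normal subgroup N and quotient G = G'/N. Let 0 → A → B → Z/mZ → 0 be a short exact sequence of G'-modules such that N acts trivially on A and on Z/mZ, and such that B is generated by A together with any single preimage ε of 1 ∈ Z/mZ. Then the map i : N → A defined by i(σ) = σ(ε) − ε is an injective homomorphism of groups which is G-equivariant for the conjugation action of G on N (via lifts to G') and the induced action of G on A. -/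
/-- Given `0 → A → B → ℤ/m → 0` of `G'`-modules (with `A = ker π`, trivial
action on `ℤ/m`), `N ⊴ G'` acting trivially on `A`, and `B` generated by `A` and a lift
`ε` of `1`, the map `i(σ) = σ•ε − ε` takes values in `A`, is a homomorphism on `N`, is
injective (i.e. `σ•ε = ε` implies `σ` acts trivially on `B`), and is `G`-equivariant for
conjugation. -/
theorem stmt_8 (G' : Type*) [Group G'] [Finite G'] (N : Subgroup G') [N.Normal]
    (B : Type*) [AddCommGroup B] [Finite B] [DistribMulAction G' B]
    (m : ℕ) (π : B →+ ZMod m) (hsurj : Function.Surjective π)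
    (hπ : ∀ (g : G') (b : B), π (g • b) = π b)
    (hNA : ∀ σ ∈ N, ∀ a : B, π a = 0 → σ • a = a)
    (ε : B) (hε : π ε = 1)
    (hgen : ∀ b : B, ∃ a : B, π a = 0 ∧ ∃ k : ℤ, b = a + k • ε) :
    (∀ σ ∈ N, π (σ • ε - ε) = 0) ∧
    (∀ σ ∈ N, ∀ τ ∈ N, (σ * τ) • ε - ε = (σ • ε - ε) + (τ • ε - ε)) ∧
    (∀ σ ∈ N, σ • ε = ε → ∀ b : B, σ • b = b) ∧
    (∀ g : G', ∀ σ ∈ N, (g * σ * g⁻¹) • ε - ε = g • (σ • ε - ε)) := by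
  have hker : ∀ σ ∈ N, π (σ • ε - ε) = 0 := by
    intro σ hσ
    rw [map_sub, hπ, sub_self]
  refine ⟨hker, ?_, ?_, ?_⟩
  · intro σ hσ τ hτ
    have h1 : σ • (τ • ε - ε) = τ • ε - ε := hNA σ hσ _ (hker τ hτ)
    have : (σ * τ) • ε = σ • ε + (τ • ε - ε) := by
      rw [mul_smul]
      calc σ • (τ • ε) = σ • (ε + (τ • ε - ε)) := by rw [add_sub_cancel]
        _ = σ • ε + σ • (τ • ε - ε) := smul_add σ _ _
        _ = σ • ε + (τ • ε - ε) := by rw [h1]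
    rw [this]; abel
  · intro σ hσ hfix b
    obtain ⟨a, ha, k, rfl⟩ := hgen b
    rw [smul_add, hNA σ hσ a ha, smul_comm σ k ε, hfix]
  · intro g σ hσ
    have ha : π (g⁻¹ • ε - ε) = 0 := by rw [map_sub, hπ, sub_self]
    have h1 : σ • (g⁻¹ • ε - ε) = g⁻¹ • ε - ε := hNA σ hσ _ ha
    have : (g * σ * g⁻¹) • ε = g • (σ • ε) + (ε - g • ε) := by
      rw [mul_smul, mul_smul]
      calc g • (σ • (g⁻¹ • ε))
          = g • (σ • (ε + (g⁻¹ • ε - ε))) := by rw [add_sub_cancel]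
        _ = g • (σ • ε + σ • (g⁻¹ • ε - ε)) := by rw [smul_add]
        _ = g • (σ • ε + (g⁻¹ • ε - ε)) := by rw [h1]
        _ = g • (σ • ε) + (g • (g⁻¹ • ε) - g • ε) := by
            rw [smul_add, smul_sub]
        _ = g • (σ • ε) + (ε - g • ε) := by rw [smul_inv_smul]
    rw [this, smul_sub]; abel
end

section
/- Let N be a finite abelian group and ψ : N → N a group endomorphism such that for every x ∈ N, ψ(x) lies in the cyclic subgroup generated by x. Then there exists an integer c such that ψ(x) = c·x for all x ∈ N. -/
/-- An endomorphism of a finite abelian group sending every element into the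
cyclic subgroup it generates is multiplication by a single integer. -/
theorem stmt_10 (N : Type*) [AddCommGroup N] [Finite N] (ψ : N → N)
    (hhom : ∀ x y : N, ψ (x + y) = ψ x + ψ y)
    (hmult : ∀ x : N, ψ x ∈ AddSubgroup.zmultiples x) :
    ∃ c : ℤ, ∀ x : N, ψ x = c • x := by
  classical
  obtain ⟨ι, hι, n, hn, ⟨e⟩⟩ := AddCommGroup.equiv_directSum_zmod_of_finite' N
  haveI : ∀ i, NeZero (n i) := fun i => ⟨by have := hn i; omega⟩
  -- transported endomorphism
  set φ := (fun y : DirectSum ι (fun i => ZMod (n i)) => e (ψ (e.symm y))) with hφ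
  have hφadd : ∀ a b, φ (a + b) = φ a + φ b := by
    intro a b
    simp [hφ, map_add, hhom]
  have hφmult : ∀ y, ∃ k : ℤ, φ y = k • y := by
    intro y
    obtain ⟨k, hk⟩ := AddSubgroup.mem_zmultiples_iff.mp (hmult (e.symm y))
    exact ⟨k, by simp [hφ, ← hk, map_zsmul]⟩
  set Φ : DirectSum ι (fun i => ZMod (n i)) →+ DirectSum ι (fun i => ZMod (n i)) := AddMonoidHom.mk' φ hφadd with hΦ
  -- the diagonal element
  set g := ∑ i, DirectSum.of (fun i => ZMod (n i)) i 1 with hg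
  obtain ⟨c, hc⟩ := hφmult g
  choose k hk using fun i => hφmult (DirectSum.of (fun i => ZMod (n i)) i 1)
  -- key: on each generator, φ is multiplication by c
  have key : ∀ j, Φ (DirectSum.of (fun i => ZMod (n i)) j 1)
      = c • DirectSum.of (fun i => ZMod (n i)) j 1 := by
    intro j
    have hΦg : Φ g = c • g := hc
    have hΦg' : (∑ i, (k i) • DirectSum.of (fun i => ZMod (n i)) i 1) = c • g := by
      rw [← hΦg, hg, map_sum]
      exact Finset.sum_congr rfl fun i _ => (hk i).symm
    -- evaluate at j
    have hj : (k j) • (1 : ZMod (n j)) = c • (1 : ZMod (n j)) := by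
      have h1 := congrArg (DirectSum.component ℤ ι (fun i => ZMod (n i)) j) hΦg'
      rw [map_sum, map_zsmul, hg, map_sum] at h1
      simp only [map_zsmul, ← DirectSum.lof_eq_of ℤ, DirectSum.component.of,
        Finset.sum_dite_eq', Finset.mem_univ, if_true] at h1
      simpa using h1
    calc Φ (DirectSum.of (fun i => ZMod (n i)) j 1)
        = (k j) • DirectSum.of (fun i => ZMod (n i)) j 1 := hk j
      _ = DirectSum.of (fun i => ZMod (n i)) j ((k j) • 1) :=
          (map_zsmul (DirectSum.of (fun i => ZMod (n i)) j) _ _).symm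
      _ = DirectSum.of (fun i => ZMod (n i)) j (c • 1) := by rw [hj]
      _ = c • DirectSum.of (fun i => ZMod (n i)) j 1 :=
          map_zsmul (DirectSum.of (fun i => ZMod (n i)) j) _ _
  -- hence φ is multiplication by c everywhere
  have hall : ∀ y, Φ y = c • y := by
    intro y
    induction y using DirectSum.induction_on with
    | zero => simp
    | of i x =>
        have hx : DirectSum.of (fun i => ZMod (n i)) i x
            = (x.val : ℤ) • DirectSum.of (fun i => ZMod (n i)) i 1 := by
          rw [← map_zsmul]
          congr 1
          simp [zsmul_eq_mul, ZMod.natCast_val, ZMod.cast_id]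
        rw [hx, map_zsmul, key i, smul_comm]
    | add a b ha hb => rw [map_add, ha, hb, smul_add]
  refine ⟨c, fun x => ?_⟩
  have := hall (e x)
  have h2 : e (ψ x) = c • e x := by simpa [hΦ, hφ, AddMonoidHom.mk'] using this
  have := congrArg e.symm h2
  simpa [map_zsmul] using this
end

section
/- Let G' be a finite group with normal subgroup N and quotient G. Let 0 → A → B → Z/mZ → 0 be an exact sequence of G'-modules with trivial action on Z/mZ, where N acts trivially on A and B is generated by A and a preimage ε of 1. Let δ : Z/mZ → H^1(G', A) be the connecting map. Suppose y ∈ H^1(G', A) is such that for every g ∈ G', the restriction of y to ⟨g⟩ lies in the image of the connecting map δ_g : Z/mZ → H^1(⟨g⟩, A). If the image of y under restriction to N, viewed in Hom_G(N, A), sends every σ ∈ N into ⟨i(σ)⟩ where i(σ) = σ(ε) − ε, then there exists an integer multiple of δ(1) whose difference with y restricts to 0 in H^1(N, A); consequently y can be modified by a multiple of δ(1) to lie in the image of inflation from H^1(G, A). -/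
lemma pointwise_mult_glob {T : Type*} [AddCommGroup T] [Finite T] (f : T →+ T)
    (h : ∀ x : T, ∃ k : ℤ, f x = k • x) : ∃ c : ℤ, ∀ x : T, f x = c • x := by
  obtain ⟨a, ha⟩ := AddMonoid.exists_addOrderOf_eq_exponent
    (AddMonoid.ExponentExists.of_finite (G := T))
  obtain ⟨c, hc⟩ := h a
  refine ⟨c, fun x => ?_⟩
  have hdn : (addOrderOf x : ℤ) ∣ (addOrderOf a : ℤ) := by
    exact_mod_cast ha ▸ AddMonoid.addOrder_dvd_exponent x
  have hd0 : (addOrderOf x : ℤ) ≠ 0 := by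
    exact_mod_cast (addOrderOf_pos x).ne'
  -- the subgroup of ℤ of integers v with v • x ∈ zmultiples a
  set M : AddSubgroup ℤ := (AddSubgroup.zmultiples a).comap (zmultiplesHom T x) with hMdef
  obtain ⟨j, hj⟩ := Int.subgroup_cyclic M
  have hmem : ∀ v : ℤ, v • x ∈ AddSubgroup.zmultiples a ↔ j ∣ v := by
    intro v
    have h1 : v ∈ M ↔ v • x ∈ AddSubgroup.zmultiples a := Iff.rfl
    rw [← h1, hj, ← AddSubgroup.zmultiples_eq_closure, Int.mem_zmultiples_iff]
  have hjd : j ∣ (addOrderOf x : ℤ) := by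
    rw [← hmem, addOrderOf_dvd_iff_zsmul_eq_zero.mp dvd_rfl]
    exact zero_mem _
  obtain ⟨s, hs⟩ := AddSubgroup.mem_zmultiples_iff.mp ((hmem j).mpr dvd_rfl)
  -- hs : s • a = j • x
  have hds : j ∣ s := by
    obtain ⟨e, he⟩ := hdn
    obtain ⟨u, hu⟩ := hjd
    have h1 : ((addOrderOf a : ℤ)) ∣ u * s := by
      rw [addOrderOf_dvd_iff_zsmul_eq_zero, mul_smul, hs, ← mul_smul, mul_comm u j, ← hu]
      exact addOrderOf_dvd_iff_zsmul_eq_zero.mp dvd_rfl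
    have hu0 : u ≠ 0 := by rintro rfl; rw [mul_zero] at hu; exact hd0 hu
    obtain ⟨t, ht⟩ := h1
    refine ⟨e * t, ?_⟩
    have h2 : u * s = u * (j * (e * t)) := by rw [ht, he, hu]; ring
    exact mul_left_cancel₀ hu0 h2
  set w : ℤ := s / j with hw
  set z : T := x - w • a with hz
  have hjw : j * w = s := Int.mul_ediv_cancel' hds
  have hjz : j • z = 0 := by
    rw [hz, smul_sub, ← mul_smul, hjw, hs, sub_self]
  have hzz : ∀ v : ℤ, v • z ∈ AddSubgroup.zmultiples a → v • z = 0 := by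
    intro v hv
    have hvx : v • x ∈ AddSubgroup.zmultiples a := by
      have h2 : v • x = v • z + (v * w) • a := by
        rw [hz, smul_sub, mul_smul]; abel
      rw [h2]
      exact add_mem hv (AddSubgroup.zsmul_mem _ (AddSubgroup.mem_zmultiples a) _)
    obtain ⟨q, hq⟩ := (hmem v).mp hvx
    rw [hq, mul_comm, mul_smul, hjz, smul_zero]
  obtain ⟨k, hk⟩ := h z
  obtain ⟨μ, hμ⟩ := h (a + z)
  have h5 : c • a + k • z = μ • a + μ • z := by
    rw [← hc, ← hk, ← smul_add, ← hμ, map_add]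
  have e1 : (c - μ) • a = (μ - k) • z := by
    rw [sub_smul, sub_smul, sub_eq_sub_iff_add_eq_add, h5]; abel
  have e2 : (μ - k) • z = 0 :=
    hzz _ (AddSubgroup.mem_zmultiples_iff.mpr ⟨c - μ, e1⟩)
  have e3 : (c - μ) • a = 0 := by rw [e1, e2]
  have hnc : (addOrderOf a : ℤ) ∣ c - μ := addOrderOf_dvd_iff_zsmul_eq_zero.mpr e3
  have hjc : (c - μ) • z = 0 := by
    obtain ⟨q, hq⟩ := (hjd.trans hdn).trans hnc
    rw [hq, mul_comm, mul_smul, hjz, smul_zero]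
  have hkz : k • z = μ • z := by
    have h6 : μ • z - k • z = 0 := by rw [← sub_smul]; exact e2
    exact (sub_eq_zero.mp h6).symm
  have hmz : μ • z = c • z := by
    have h6 : c • z - μ • z = 0 := by rw [← sub_smul]; exact hjc
    exact (sub_eq_zero.mp h6).symm
  have hxzw : x = z + w • a := by rw [hz]; abel
  rw [hxzw, map_add, map_zsmul, hc, hk, hkz, hmz, smul_comm w c a, ← smul_add]


lemma pointwise_mult_glob2 {G B : Type*} [AddGroup G] [AddCommGroup B] [Finite B]
    (I E : G →+ B) (h : ∀ σ : G, ∃ k : ℤ, E σ = k • I σ) :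
    ∃ c : ℤ, ∀ σ : G, E σ = c • I σ := by
  classical
  have hwell : ∀ σ τ : G, I σ = I τ → E σ = E τ := by
    intro σ τ hIT
    have h1 : I (σ - τ) = 0 := by rw [map_sub, hIT, sub_self]
    obtain ⟨k, hk⟩ := h (σ - τ)
    have h2 : E (σ - τ) = 0 := by rw [hk, h1, smul_zero]
    rw [map_sub, sub_eq_zero] at h2
    exact h2
  set S := I.range with hS
  have memF : ∀ s : S, ∃ σ : G, I σ = (s : B) := fun s => s.2
  choose sec hsec using memF
  have hES : ∀ σ : G, E σ ∈ S := by
    intro σ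
    obtain ⟨k, hk⟩ := h σ
    exact ⟨k • σ, by rw [map_zsmul]; exact hk.symm⟩
  let F : S →+ S := {
    toFun := fun s => ⟨E (sec s), hES (sec s)⟩
    map_zero' := by
      apply Subtype.ext
      show E (sec 0) = 0
      have h0 : I (sec 0) = I 0 := by rw [hsec, map_zero]; rfl
      rw [hwell _ _ h0, map_zero]
    map_add' := by
      intro s t
      apply Subtype.ext
      show E (sec (s + t)) = E (sec s) + E (sec t)
      have h0 : I (sec (s + t)) = I (sec s + sec t) := by
        rw [map_add, hsec, hsec, hsec]; rfl
      rw [hwell _ _ h0, map_add] }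
  have hF : ∀ s : S, ∃ k : ℤ, F s = k • s := by
    intro s
    obtain ⟨k, hk⟩ := h (sec s)
    refine ⟨k, Subtype.ext ?_⟩
    show E (sec s) = ((k • s : S) : B)
    rw [hk, hsec]; rfl
  obtain ⟨c, hc⟩ := pointwise_mult_glob F hF
  refine ⟨c, fun σ => ?_⟩
  set s : S := ⟨I σ, ⟨σ, rfl⟩⟩ with hsdef
  have h1 : E (sec s) = E σ := hwell _ _ (by rw [hsec])
  have h2 := congrArg Subtype.val (hc s)
  rw [← h1]
  exact h2

/-- Setup `0 → A → B → ℤ/m → 0` as before (`A = ker π`, `N ⊴ G'` trivial on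
`A`, `ε` a lift of 1 generating `B` over `A`). If `η` is an `A`-valued 1-cocycle on `G'`
whose restriction to every cyclic subgroup lies in the image of the local connecting map
(i.e. is cohomologous to a multiple of `x ↦ x•ε − ε`), and whose restriction to `N`
(a homomorphism) sends each `σ` to a multiple of `i(σ) = σ•ε − ε`, then some multiple of
`δ(1)` differs from `η` by a class restricting to 0 on `N`; consequently `η` can be
modified by a multiple of `δ(1)` to lie in the image of inflation from `G'/N`. -/
theorem stmt_11 (G' : Type*) [Group G'] [Finite G'] (N : Subgroup G') [N.Normal]
    (B : Type*) [AddCommGroup B] [Finite B] [DistribMulAction G' B]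
    (m : ℕ) (π : B →+ ZMod m) (hsurj : Function.Surjective π)
    (hπ : ∀ (g : G') (b : B), π (g • b) = π b)
    (hNA : ∀ σ ∈ N, ∀ a : B, π a = 0 → σ • a = a)
    (ε : B) (hε : π ε = 1)
    (hgen : ∀ b : B, ∃ a : B, π a = 0 ∧ ∃ k : ℤ, b = a + k • ε)
    (η : G' → B) (hηA : ∀ g : G', π (η g) = 0)
    (hηcoc : ∀ g h : G', η (g * h) = g • η h + η g)
    (hloc : ∀ g : G', ∃ (k : ℤ) (a : B), π a = 0 ∧
      ∀ x ∈ Subgroup.zpowers g, η x - k • (x • ε - ε) = x • a - a)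
    (hres : ∀ σ ∈ N, ∃ k : ℤ, η σ = k • (σ • ε - ε)) :
    ∃ c : ℤ, (∀ σ ∈ N, η σ = c • (σ • ε - ε)) ∧
      ∃ η' : G' → B,
        (∀ g : G', π (η' g) = 0) ∧
        (∀ g h : G', η' (g * h) = g • η' h + η' g) ∧
        (∀ σ ∈ N, η' σ = 0) ∧
        (∀ g : G', ∀ σ ∈ N, η' (g * σ) = η' g) ∧
        ∃ a : B, π a = 0 ∧ ∀ g : G', η g - c • (g • ε - ε) - η' g = g • a - a := by
  classical
  have hπi : ∀ g : G', π (g • ε - ε) = 0 := by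
    intro g; rw [map_sub, hπ, sub_self]
  have ih : ∀ σ τ : G', σ ∈ N → τ ∈ N →
      (σ * τ) • ε - ε = (σ • ε - ε) + (τ • ε - ε) := by
    intro σ τ hσ hτ
    have h1 : σ • (τ • ε) = σ • (τ • ε - ε) + σ • ε := by
      rw [← smul_add, sub_add_cancel]
    rw [mul_smul, h1, hNA σ hσ _ (hπi τ)]
    abel
  have ηh : ∀ σ τ : G', σ ∈ N → τ ∈ N → η (σ * τ) = η σ + η τ := by
    intro σ τ hσ hτ
    rw [hηcoc, hNA σ hσ _ (hηA τ), add_comm]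
  let I : Additive ↥N →+ B := AddMonoidHom.mk'
    (fun σ => ((Additive.toMul σ : ↥N) : G') • ε - ε)
    (fun σ τ => ih _ _ (Additive.toMul σ).2 (Additive.toMul τ).2)
  let E : Additive ↥N →+ B := AddMonoidHom.mk'
    (fun σ => η ((Additive.toMul σ : ↥N) : G'))
    (fun σ τ => ηh _ _ (Additive.toMul σ).2 (Additive.toMul τ).2)
  have hEI : ∀ σ : Additive ↥N, ∃ k : ℤ, E σ = k • I σ := by
    intro σ
    exact hres _ (Additive.toMul σ).2
  obtain ⟨c, hc⟩ := pointwise_mult_glob2 I E hEI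
  have hcN : ∀ σ ∈ N, η σ = c • (σ • ε - ε) := by
    intro σ hσ
    exact hc (Additive.ofMul (⟨σ, hσ⟩ : ↥N))
  refine ⟨c, hcN, fun g => η g - c • (g • ε - ε), ?_, ?_, ?_, ?_, ?_⟩
  · intro g
    rw [map_sub, map_zsmul, hπi, hηA, smul_zero, sub_zero]
  · intro g h
    have hiε : (g * h) • ε - ε = g • (h • ε - ε) + (g • ε - ε) := by
      rw [mul_smul, smul_sub]; abel
    have hcs : g • (c • (h • ε - ε)) = c • (g • (h • ε - ε)) :=
      map_zsmul (DistribMulAction.toAddMonoidHom B g) c (h • ε - ε)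
    show η (g * h) - c • ((g * h) • ε - ε) =
      g • (η h - c • (h • ε - ε)) + (η g - c • (g • ε - ε))
    rw [hηcoc, hiε, smul_add, smul_sub g (η h), hcs]
    abel
  · intro σ hσ
    show η σ - c • (σ • ε - ε) = 0
    rw [hcN σ hσ, sub_self]
  · intro g σ hσ
    have hiε : (g * σ) • ε - ε = g • (σ • ε - ε) + (g • ε - ε) := by
      rw [mul_smul, smul_sub]; abel
    have hcs : g • (c • (σ • ε - ε)) = c • (g • (σ • ε - ε)) :=
      map_zsmul (DistribMulAction.toAddMonoidHom B g) c (σ • ε - ε)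
    show η (g * σ) - c • ((g * σ) • ε - ε) = η g - c • (g • ε - ε)
    rw [hηcoc, hiε, hcN σ hσ, smul_add, hcs]
    abel
  · exact ⟨0, map_zero π, fun g => by rw [smul_zero, sub_zero, sub_self]⟩
end

section
/- Let G be a finite group and M a finite G-module, and let N ⊴ G act trivially on M, with G/N-module structure on N by conjugation. Suppose G_1 := G/N satisfies H^1(G_1, M) = 0 and suppose N admits a filtration 0 = N_0 ⊆ N_1 ⊆ ⋯ ⊆ N_r = N by G_1-submodules whose successive quotients are G_1-isomorphic to subquotients of a G_1-module E such that E and M have no common irreducible G_1-subquotient. Then Hom_{G_1}(N, M) = 0, and consequently H^1(G, M) = 0. -/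
/-- Let `N ⊴ G` act trivially on `M`, let `G₁ = G/N`, suppose
`H^1(G₁, M) = 0` (encoded via inflated cocycles), suppose `N` admits a filtration by
`G₁`-submodules (subgroups of `N` normal in `G`) whose successive quotients are
`G₁`-isomorphic to subquotients of a `G₁`-module `E` (isomorphisms of quotients are
encoded via graph subobjects `W`), and suppose `E` and `M` have no common irreducible
subquotient. Then `Hom_{G₁}(N, M) = 0` and consequently `H^1(G, M) = 0`. -/
theorem stmt_14 (G : Type*) [Group G] [Finite G] (N : Subgroup G) [N.Normal]
    (M : Type*) [AddCommGroup M] [Finite M] [DistribMulAction G M]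
    (E : Type*) [AddCommGroup E] [Finite E] [DistribMulAction (G ⧸ N) E]
    (htrivM : ∀ σ ∈ N, ∀ m : M, σ • m = m)
    (hH1 : ∀ ξ : G → M, (∀ g h : G, ξ (g * h) = g • ξ h + ξ g) → (∀ σ ∈ N, ξ σ = 0) →
      (∀ g : G, ∀ σ ∈ N, ξ (g * σ) = ξ g) → ∃ m : M, ∀ g : G, ξ g = g • m - m)
    (hfilt : ∃ (r : ℕ) (c : ℕ → Subgroup G),
      c 0 = ⊥ ∧ c r = N ∧ (∀ i, c i ≤ c (i + 1)) ∧
      (∀ i, ∀ g : G, ∀ x ∈ c i, g * x * g⁻¹ ∈ c i) ∧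
      (∀ i < r, ∃ E₁ E₂ : AddSubgroup E, E₁ ≤ E₂ ∧
        (∀ g : G ⧸ N, ∀ e ∈ E₁, g • e ∈ E₁) ∧
        (∀ g : G ⧸ N, ∀ e ∈ E₂, g • e ∈ E₂) ∧
        ∃ W : Set (G × E),
          ((1 : G), (0 : E)) ∈ W ∧
          (∀ (x y : G) (e f : E), (x, e) ∈ W → (y, f) ∈ W → (x * y, e + f) ∈ W) ∧
          (∀ (x : G) (e : E), (x, e) ∈ W → (x⁻¹, -e) ∈ W) ∧
          (∀ (g x : G) (e : E), (x, e) ∈ W →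
            (g * x * g⁻¹, (QuotientGroup.mk g : G ⧸ N) • e) ∈ W) ∧
          (∀ (x : G) (e : E), (x, e) ∈ W → x ∈ c (i + 1) ∧ e ∈ E₂) ∧
          (∀ x ∈ c (i + 1), ∃ e ∈ E₂, (x, e) ∈ W) ∧
          (∀ e ∈ E₂, ∃ x ∈ c (i + 1), (x, e) ∈ W) ∧
          (∀ x : G, (x, (0 : E)) ∈ W ↔ x ∈ c i) ∧
          (∀ e : E, ((1 : G), e) ∈ W ↔ e ∈ E₁)))
    (hnocommon : ¬ ∃ (E₁ E₂ : AddSubgroup E) (M₁ M₂ : AddSubgroup M),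
      E₁ < E₂ ∧ M₁ < M₂ ∧
      (∀ g : G ⧸ N, ∀ e ∈ E₁, g • e ∈ E₁) ∧ (∀ g : G ⧸ N, ∀ e ∈ E₂, g • e ∈ E₂) ∧
      (∀ g : G, ∀ m ∈ M₁, g • m ∈ M₁) ∧ (∀ g : G, ∀ m ∈ M₂, g • m ∈ M₂) ∧
      (∀ S : AddSubgroup E, (∀ g : G ⧸ N, ∀ e ∈ S, g • e ∈ S) →
        E₁ ≤ S → S ≤ E₂ → S = E₁ ∨ S = E₂) ∧
      (∀ T : AddSubgroup M, (∀ g : G, ∀ m ∈ T, g • m ∈ T) →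
        M₁ ≤ T → T ≤ M₂ → T = M₁ ∨ T = M₂) ∧
      ∃ W : AddSubgroup (E × M),
        (∀ g : G, ∀ p ∈ W, ((QuotientGroup.mk g : G ⧸ N) • Prod.fst p, g • Prod.snd p) ∈ W) ∧
        (∀ p ∈ W, Prod.fst p ∈ E₂ ∧ Prod.snd p ∈ M₂) ∧
        (∀ e ∈ E₂, ∃ m ∈ M₂, (e, m) ∈ W) ∧
        (∀ m ∈ M₂, ∃ e ∈ E₂, (e, m) ∈ W) ∧
        (∀ e : E, (e, (0 : M)) ∈ W ↔ e ∈ E₁) ∧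
        (∀ m : M, ((0 : E), m) ∈ W ↔ m ∈ M₁)) :
    (∀ φ : ↥N → M, (∀ σ τ : ↥N, φ (σ * τ) = φ σ + φ τ) →
      (∀ (g : G) (σ : ↥N) (h : g * ↑σ * g⁻¹ ∈ N), φ ⟨g * ↑σ * g⁻¹, h⟩ = g • φ σ) →
      ∀ σ : ↥N, φ σ = 0) ∧
    (∀ ξ : G → M, (∀ g h : G, ξ (g * h) = g • ξ h + ξ g) →
      ∃ m : M, ∀ g : G, ξ g = g • m - m) := by
  classical
  have hpart1 : ∀ φ : ↥N → M, (∀ σ τ : ↥N, φ (σ * τ) = φ σ + φ τ) →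
      (∀ (g : G) (σ : ↥N) (h : g * ↑σ * g⁻¹ ∈ N), φ ⟨g * ↑σ * g⁻¹, h⟩ = g • φ σ) →
      ∀ σ : ↥N, φ σ = 0 := by
    intro φ hadd hconj
    by_contra hne
    push_neg at hne
    obtain ⟨σ₀, hσ₀⟩ := hne
    have hφ1 : φ 1 = 0 := by
      have h := hadd 1 1
      rw [mul_one] at h
      exact right_eq_add.mp h
    have hφinv : ∀ σ : ↥N, φ σ⁻¹ = -φ σ := by
      intro σ
      have h := hadd σ⁻¹ σ
      rw [inv_mul_cancel, hφ1] at h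
      exact eq_neg_of_add_eq_zero_left h.symm
    obtain ⟨r, c, hc0, hcr, hmono, hnorm, hstep⟩ := hfilt
    have hle : ∀ a b : ℕ, a ≤ b → c a ≤ c b := by
      intro a b hab
      induction hab with
      | refl => exact le_rfl
      | step _ ih => exact ih.trans (hmono _)
    have hcN : ∀ k, k ≤ r → c k ≤ N := fun k hk => hcr ▸ hle k r hk
    have hex : ∃ j : ℕ, ∃ (x : G) (hx : x ∈ N), x ∈ c j ∧ φ ⟨x, hx⟩ ≠ 0 := by
      refine ⟨r, ↑σ₀, σ₀.2, hcr ▸ σ₀.2, ?_⟩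
      simpa using hσ₀
    have hQj := Nat.find_spec hex
    have hjr : Nat.find hex ≤ r :=
      Nat.find_le (by refine ⟨↑σ₀, σ₀.2, hcr ▸ σ₀.2, ?_⟩; simpa using hσ₀)
    have hj1 : Nat.find hex ≠ 0 := by
      intro h0
      obtain ⟨x, hx, hxc, hxne⟩ := hQj
      rw [h0, hc0, Subgroup.mem_bot] at hxc
      subst hxc
      exact hxne hφ1
    obtain ⟨i, hij⟩ : ∃ i : ℕ, i + 1 = Nat.find hex := ⟨Nat.find hex - 1, by omega⟩
    have hir : i < r := by omega
    have hvanish : ∀ x ∈ c i, ∀ hx : x ∈ N, φ ⟨x, hx⟩ = 0 := by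
      intro x hxc hx
      by_contra hne'
      exact Nat.find_min hex (show i < Nat.find hex by omega) ⟨x, hx, hxc, hne'⟩
    obtain ⟨E₁, E₂, hE12, hE₁inv, hE₂inv, W, hW1, hWmul, hWinv, hWconj, hWmem,
      hWsurjx, hWsurje, hWker0, hWkerE⟩ := hstep i hir
    have hc1N : c (i + 1) ≤ N := hcN (i + 1) (by omega)
    have hsame : ∀ (x y : G) (e : E), (x, e) ∈ W → (y, e) ∈ W →
        ∀ (hx : x ∈ N) (hy : y ∈ N), φ ⟨x, hx⟩ = φ ⟨y, hy⟩ := by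
      intro x y e hxe hye hx hy
      have h1 : (x * y⁻¹, e + -e) ∈ W := hWmul x y⁻¹ e (-e) hxe (hWinv y e hye)
      rw [add_neg_cancel] at h1
      have h2 : x * y⁻¹ ∈ c i := (hWker0 _).mp h1
      have hxyN : x * y⁻¹ ∈ N := N.mul_mem hx (N.inv_mem hy)
      have h3 : φ ⟨x * y⁻¹, hxyN⟩ = 0 := hvanish _ h2 _
      have h4 : (⟨x, hx⟩ : ↥N) = ⟨x * y⁻¹, hxyN⟩ * ⟨y, hy⟩ := by
        ext
        simp [inv_mul_cancel_right]
      rw [h4, hadd, h3, zero_add]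
    have hΨ : ∃ ψ : E → M, ∀ (x : G) (e : E), (x, e) ∈ W → ∀ hx : x ∈ N,
        ψ e = φ ⟨x, hx⟩ := by
      refine ⟨fun e => if h : ∃ x, (x, e) ∈ W ∧ x ∈ N then
        φ ⟨h.choose, h.choose_spec.2⟩ else 0, ?_⟩
      intro x e hxe hx
      have h : ∃ x, (x, e) ∈ W ∧ x ∈ N := ⟨x, hxe, hx⟩
      simp only [dif_pos h]
      exact hsame _ _ _ h.choose_spec.1 hxe _ hx
    obtain ⟨ψ, hψ⟩ := hΨ
    have hψspec : ∀ e ∈ E₂, ∃ (x : G) (hx : x ∈ N),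
        (x, e) ∈ W ∧ x ∈ c (i + 1) ∧ ψ e = φ ⟨x, hx⟩ := by
      intro e he
      obtain ⟨x, hxc, hxe⟩ := hWsurje e he
      exact ⟨x, hc1N hxc, hxe, hxc, hψ x e hxe _⟩
    have hψ0 : ψ 0 = 0 := by
      rw [hψ 1 0 hW1 N.one_mem]
      exact hφ1
    have hψadd : ∀ e ∈ E₂, ∀ f ∈ E₂, ψ (e + f) = ψ e + ψ f := by
      intro e he f hf
      obtain ⟨x, hx, hxe, _, hxψ⟩ := hψspec e he
      obtain ⟨y, hy, hyf, _, hyψ⟩ := hψspec f hf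
      rw [hψ (x * y) (e + f) (hWmul x y e f hxe hyf) (N.mul_mem hx hy), hxψ, hyψ, ← hadd]
      rfl
    have hψneg : ∀ e ∈ E₂, ψ (-e) = -ψ e := by
      intro e he
      obtain ⟨x, hx, hxe, _, hxψ⟩ := hψspec e he
      rw [hψ x⁻¹ (-e) (hWinv x e hxe) (N.inv_mem hx), hxψ]
      exact hφinv ⟨x, hx⟩
    have hψsub : ∀ e ∈ E₂, ∀ f ∈ E₂, ψ (e - f) = ψ e - ψ f := by
      intro e he f hf
      rw [sub_eq_add_neg, hψadd e he (-f) (E₂.neg_mem hf), hψneg f hf, sub_eq_add_neg]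
    have hψequiv : ∀ (g : G), ∀ e ∈ E₂,
        ψ ((QuotientGroup.mk g : G ⧸ N) • e) = g • ψ e := by
      intro g e he
      obtain ⟨x, hx, hxe, _, hxψ⟩ := hψspec e he
      have h2 : g * x * g⁻¹ ∈ N := Subgroup.Normal.conj_mem ‹N.Normal› x hx g
      rw [hψ _ _ (hWconj g x e hxe) h2, hxψ]
      exact hconj g ⟨x, hx⟩ h2
    have hψne : ∃ e ∈ E₂, ψ e ≠ 0 := by
      obtain ⟨x, hx, hxc, hxne⟩ := hQj
      rw [← hij] at hxc
      obtain ⟨e, he, hxe⟩ := hWsurjx x hxc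
      exact ⟨e, he, by rw [hψ x e hxe hx]; exact hxne⟩
    -- the image of ψ on E₂, as a subgroup of M
    have hIex : ∃ I : AddSubgroup M, ∀ m, m ∈ I ↔ ∃ e ∈ E₂, ψ e = m := by
      refine ⟨{ carrier := {m | ∃ e ∈ E₂, ψ e = m},
                zero_mem' := ⟨0, E₂.zero_mem, hψ0⟩,
                add_mem' := ?_, neg_mem' := ?_ }, fun m => Iff.rfl⟩
      · rintro a b ⟨e, he, rfl⟩ ⟨f, hf, rfl⟩
        exact ⟨e + f, E₂.add_mem he hf, hψadd e he f hf⟩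
      · rintro a ⟨e, he, rfl⟩
        exact ⟨-e, E₂.neg_mem he, hψneg e he⟩
    obtain ⟨I, hImem⟩ := hIex
    have hIinv : ∀ g : G, ∀ m ∈ I, g • m ∈ I := by
      intro g m hm
      obtain ⟨e, he, rfl⟩ := (hImem m).mp hm
      exact (hImem _).mpr ⟨(QuotientGroup.mk g : G ⧸ N) • e, hE₂inv _ e he, hψequiv g e he⟩
    have hIne : I ≠ ⊥ := by
      obtain ⟨e, he, hne'⟩ := hψne
      intro hbot
      exact hne' ((AddSubgroup.eq_bot_iff_forall I).mp hbot _ ((hImem _).mpr ⟨e, he, rfl⟩))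
    -- choose a minimal nonzero G-invariant subgroup M₂' of I
    have hfinsub : Finite (AddSubgroup M) :=
      Finite.of_injective (fun P => (P : Set M)) SetLike.coe_injective
    obtain ⟨M₂', hM₂'S, hMmin⟩ : ∃ M₂' ∈
        {P : AddSubgroup M | P ≠ ⊥ ∧ (∀ g : G, ∀ m ∈ P, g • m ∈ P) ∧ P ≤ I},
        ∀ P ∈ {P : AddSubgroup M | P ≠ ⊥ ∧ (∀ g : G, ∀ m ∈ P, g • m ∈ P) ∧ P ≤ I},
          id P ≤ id M₂' → id M₂' = id P := by
      obtain ⟨a, ha, hmin⟩ := (Set.toFinite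
        {P : AddSubgroup M | P ≠ ⊥ ∧ (∀ g : G, ∀ m ∈ P, g • m ∈ P) ∧ P ≤ I}).exists_minimal
        ⟨I, hIne, hIinv, le_rfl⟩
      exact ⟨a, ha, fun P hP hle => le_antisymm (hmin hP hle) hle⟩
    obtain ⟨hM₂'ne, hM₂'inv, hM₂'I⟩ := hM₂'S
    simp only [id] at hMmin
    have hMmin' : ∀ P : AddSubgroup M, P ≠ ⊥ → (∀ g : G, ∀ m ∈ P, g • m ∈ P) →
        P ≤ I → P ≤ M₂' → M₂' = P := fun P h1 h2 h3 h4 => hMmin P ⟨h1, h2, h3⟩ h4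
    -- E₂' = preimage of M₂' in E₂, E₁' = kernel of ψ in E₂
    have hE₂'ex : ∃ P : AddSubgroup E, ∀ e, e ∈ P ↔ e ∈ E₂ ∧ ψ e ∈ M₂' := by
      refine ⟨{ carrier := {e | e ∈ E₂ ∧ ψ e ∈ M₂'},
                zero_mem' := ⟨E₂.zero_mem, by rw [hψ0]; exact M₂'.zero_mem⟩,
                add_mem' := ?_, neg_mem' := ?_ }, fun e => Iff.rfl⟩
      · rintro a b ⟨ha, ha'⟩ ⟨hb, hb'⟩
        exact ⟨E₂.add_mem ha hb, by rw [hψadd a ha b hb]; exact M₂'.add_mem ha' hb'⟩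
      · rintro a ⟨ha, ha'⟩
        exact ⟨E₂.neg_mem ha, by rw [hψneg a ha]; exact M₂'.neg_mem ha'⟩
    obtain ⟨E₂', hE₂'mem⟩ := hE₂'ex
    have hE₁'ex : ∃ P : AddSubgroup E, ∀ e, e ∈ P ↔ e ∈ E₂ ∧ ψ e = 0 := by
      refine ⟨{ carrier := {e | e ∈ E₂ ∧ ψ e = 0},
                zero_mem' := ⟨E₂.zero_mem, hψ0⟩,
                add_mem' := ?_, neg_mem' := ?_ }, fun e => Iff.rfl⟩
      · rintro a b ⟨ha, ha'⟩ ⟨hb, hb'⟩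
        exact ⟨E₂.add_mem ha hb, by rw [hψadd a ha b hb, ha', hb', add_zero]⟩
      · rintro a ⟨ha, ha'⟩
        exact ⟨E₂.neg_mem ha, by rw [hψneg a ha, ha', neg_zero]⟩
    obtain ⟨E₁', hE₁'mem⟩ := hE₁'ex
    have hE₁'le : E₁' ≤ E₂' := by
      intro e he
      obtain ⟨h1, h2⟩ := (hE₁'mem e).mp he
      exact (hE₂'mem e).mpr ⟨h1, by rw [h2]; exact M₂'.zero_mem⟩
    -- M₂' ≠ ⊥ gives a nonzero element, whence E₁' < E₂'
    obtain ⟨m₀, hm₀M, hm₀ne⟩ : ∃ m ∈ M₂', m ≠ 0 := by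
      by_contra hc
      push_neg at hc
      exact hM₂'ne ((AddSubgroup.eq_bot_iff_forall M₂').mpr hc)
    obtain ⟨e₀, he₀, he₀ψ⟩ := (hImem m₀).mp (hM₂'I hm₀M)
    have he₀E₂' : e₀ ∈ E₂' := (hE₂'mem e₀).mpr ⟨he₀, by rw [he₀ψ]; exact hm₀M⟩
    have he₀E₁' : e₀ ∉ E₁' := fun h => hm₀ne (he₀ψ ▸ ((hE₁'mem e₀).mp h).2)
    refine hnocommon ⟨E₁', E₂', ⊥, M₂',
      SetLike.lt_iff_le_and_exists.mpr ⟨hE₁'le, e₀, he₀E₂', he₀E₁'⟩,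
      bot_lt_iff_ne_bot.mpr hM₂'ne, ?_, ?_, ?_, hM₂'inv, ?_, ?_, ?_⟩
    · -- E₁' invariant
      intro g e he
      obtain ⟨g', rfl⟩ := QuotientGroup.mk_surjective g
      obtain ⟨h1, h2⟩ := (hE₁'mem e).mp he
      exact (hE₁'mem _).mpr ⟨hE₂inv _ e h1,
        by rw [hψequiv g' e h1, h2, smul_zero]⟩
    · -- E₂' invariant
      intro g e he
      obtain ⟨g', rfl⟩ := QuotientGroup.mk_surjective g
      obtain ⟨h1, h2⟩ := (hE₂'mem e).mp he
      exact (hE₂'mem _).mpr ⟨hE₂inv _ e h1,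
        by rw [hψequiv g' e h1]; exact hM₂'inv g' _ h2⟩
    · -- ⊥ invariant
      intro g m hm
      rw [AddSubgroup.mem_bot] at hm ⊢
      rw [hm, smul_zero]
    · -- maximality on the E side
      intro S' hS'inv hle1 hle2
      have hS'E₂ : ∀ e ∈ S', e ∈ E₂ := fun e he => ((hE₂'mem e).mp (hle2 he)).1
      have hTex : ∃ T : AddSubgroup M, ∀ m, m ∈ T ↔ ∃ e ∈ S', ψ e = m := by
        refine ⟨{ carrier := {m | ∃ e ∈ S', ψ e = m},
                  zero_mem' := ⟨0, S'.zero_mem, hψ0⟩,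
                  add_mem' := ?_, neg_mem' := ?_ }, fun m => Iff.rfl⟩
        · rintro a b ⟨e, he, rfl⟩ ⟨f, hf, rfl⟩
          exact ⟨e + f, S'.add_mem he hf, hψadd e (hS'E₂ e he) f (hS'E₂ f hf)⟩
        · rintro a ⟨e, he, rfl⟩
          exact ⟨-e, S'.neg_mem he, hψneg e (hS'E₂ e he)⟩
      obtain ⟨T, hTmem⟩ := hTex
      by_cases hT : T = ⊥
      · left
        refine le_antisymm ?_ hle1
        intro e he
        have : ψ e = 0 := by
          have := (hTmem (ψ e)).mpr ⟨e, he, rfl⟩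
          rw [hT, AddSubgroup.mem_bot] at this
          exact this
        exact (hE₁'mem e).mpr ⟨hS'E₂ e he, this⟩
      · right
        have hTinv : ∀ g : G, ∀ m ∈ T, g • m ∈ T := by
          intro g m hm
          obtain ⟨e, he, rfl⟩ := (hTmem m).mp hm
          exact (hTmem _).mpr ⟨(QuotientGroup.mk g : G ⧸ N) • e,
            hS'inv _ e he, hψequiv g e (hS'E₂ e he)⟩
        have hTI : T ≤ I := by
          intro m hm
          obtain ⟨e, he, rfl⟩ := (hTmem m).mp hm
          exact (hImem _).mpr ⟨e, hS'E₂ e he, rfl⟩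
        have hTM₂' : T ≤ M₂' := by
          intro m hm
          obtain ⟨e, he, rfl⟩ := (hTmem m).mp hm
          exact ((hE₂'mem e).mp (hle2 he)).2
        have hMT : M₂' = T := hMmin' T hT hTinv hTI hTM₂'
        refine le_antisymm hle2 ?_
        intro e he
        obtain ⟨h1, h2⟩ := (hE₂'mem e).mp he
        rw [hMT] at h2
        obtain ⟨s, hs, hsψ⟩ := (hTmem (ψ e)).mp h2
        have hesE₁' : e - s ∈ E₁' := (hE₁'mem _).mpr ⟨E₂.sub_mem h1 (hS'E₂ s hs),
          by rw [hψsub e h1 s (hS'E₂ s hs), hsψ, sub_self]⟩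
        have : e - s + s ∈ S' := S'.add_mem (hle1 hesE₁') hs
        rwa [sub_add_cancel] at this
    · -- maximality on the M side
      intro T hTinv hbot hleM
      by_cases hT : T = ⊥
      · exact Or.inl hT
      · exact Or.inr (hMmin' T hT hTinv (hleM.trans hM₂'I) hleM).symm
    · -- the graph subgroup W'
      have hW'ex : ∃ W' : AddSubgroup (E × M),
          ∀ p : E × M, p ∈ W' ↔ p.1 ∈ E₂' ∧ p.2 = ψ p.1 := by
        refine ⟨{ carrier := {p | p.1 ∈ E₂' ∧ p.2 = ψ p.1},
                  zero_mem' := ⟨E₂'.zero_mem, hψ0.symm⟩,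
                  add_mem' := ?_, neg_mem' := ?_ }, fun p => Iff.rfl⟩
        · rintro ⟨a, m⟩ ⟨b, n⟩ ⟨ha, hm⟩ ⟨hb, hn⟩
          refine ⟨E₂'.add_mem ha hb, ?_⟩
          have := hψadd a ((hE₂'mem a).mp ha).1 b ((hE₂'mem b).mp hb).1
          simp only [Prod.fst_add, Prod.snd_add] at *
          rw [this, hm, hn]
        · rintro ⟨a, m⟩ ⟨ha, hm⟩
          refine ⟨E₂'.neg_mem ha, ?_⟩
          have := hψneg a ((hE₂'mem a).mp ha).1
          simp only [Prod.fst_neg, Prod.snd_neg] at *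
          rw [this, hm]
      obtain ⟨W', hW'mem⟩ := hW'ex
      refine ⟨W', ?_, ?_, ?_, ?_, ?_, ?_⟩
      · intro g p hp
        obtain ⟨h1, h2⟩ := (hW'mem p).mp hp
        refine (hW'mem _).mpr ⟨?_, ?_⟩
        · obtain ⟨ha, hb⟩ := (hE₂'mem p.1).mp h1
          exact (hE₂'mem _).mpr ⟨hE₂inv _ _ ha,
            by rw [hψequiv g p.1 ha]; exact hM₂'inv g _ hb⟩
        · show g • p.2 = ψ ((QuotientGroup.mk g : G ⧸ N) • p.1)
          rw [h2, hψequiv g p.1 ((hE₂'mem p.1).mp h1).1]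
      · intro p hp
        obtain ⟨h1, h2⟩ := (hW'mem p).mp hp
        exact ⟨h1, by rw [h2]; exact ((hE₂'mem p.1).mp h1).2⟩
      · intro e he
        exact ⟨ψ e, ((hE₂'mem e).mp he).2, (hW'mem (e, ψ e)).mpr ⟨he, rfl⟩⟩
      · intro m hm
        obtain ⟨e, he, rfl⟩ := (hImem m).mp (hM₂'I hm)
        exact ⟨e, (hE₂'mem e).mpr ⟨he, hm⟩, (hW'mem (e, ψ e)).mpr
          ⟨(hE₂'mem e).mpr ⟨he, hm⟩, rfl⟩⟩
      · intro e
        constructor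
        · intro h
          obtain ⟨h1, h2⟩ := (hW'mem (e, 0)).mp h
          exact (hE₁'mem e).mpr ⟨((hE₂'mem e).mp h1).1, h2.symm⟩
        · intro h
          obtain ⟨h1, h2⟩ := (hE₁'mem e).mp h
          exact (hW'mem (e, 0)).mpr ⟨(hE₂'mem e).mpr
            ⟨h1, by rw [h2]; exact M₂'.zero_mem⟩, h2.symm⟩
      · intro m
        constructor
        · intro h
          obtain ⟨_, h2⟩ := (hW'mem (0, m)).mp h
          rw [AddSubgroup.mem_bot]
          exact h2.trans hψ0
        · intro h
          rw [AddSubgroup.mem_bot] at h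
          subst h
          exact (hW'mem (0, 0)).mpr ⟨E₂'.zero_mem, hψ0.symm⟩
  refine ⟨hpart1, ?_⟩
  intro ξ hcoc
  have hξ1 : ξ 1 = 0 := by
    have h := hcoc 1 1
    rw [mul_one, one_smul] at h
    exact left_eq_add.mp h
  have hinvξ : ∀ g : G, g • ξ g⁻¹ = -ξ g := by
    intro g
    have h := hcoc g g⁻¹
    rw [mul_inv_cancel, hξ1] at h
    exact eq_neg_of_add_eq_zero_left h.symm
  have hN0 : ∀ σ ∈ N, ξ σ = 0 := by
    have key := hpart1 (fun σ : ↥N => ξ ↑σ) ?_ ?_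
    · intro σ hσ
      exact key ⟨σ, hσ⟩
    · intro σ τ
      show ξ ↑(σ * τ) = ξ ↑σ + ξ ↑τ
      rw [Subgroup.coe_mul, hcoc ↑σ ↑τ, htrivM ↑σ σ.2, add_comm]
    · intro g σ hmem
      show ξ (g * ↑σ * g⁻¹) = g • ξ ↑σ
      have h1 : ξ (g * ↑σ * g⁻¹) = g • ((↑σ : G) • ξ g⁻¹) + (g • ξ ↑σ + ξ g) := by
        rw [hcoc (g * ↑σ) g⁻¹, hcoc g ↑σ, mul_smul]
      rw [htrivM ↑σ σ.2, hinvξ g] at h1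
      rw [h1]
      abel
  have hcoset : ∀ g : G, ∀ σ ∈ N, ξ (g * σ) = ξ g := by
    intro g σ hσ
    rw [hcoc g σ, hN0 σ hσ, smul_zero, zero_add]
  exact hH1 ξ hcoc hN0 hcoset
end

section
/- Let k be a field, and let 0 → A → B → Z/mZ → 0 be an exact sequence of finite Galois modules over k with trivial Galois action on Z/mZ. Let [ε] ∈ H^1(k, A) denote the image of 1 ∈ Z/mZ under the connecting map. Then: (1) the locally trivial subgroup Sh^1(k, B) is contained in the image of H^1(k, A) → H^1(k, B); (2) if Sh^1(k, B) = 0 then Sh^1(k, A) is contained in the cyclic subgroup generated by [ε]; and (3) if [ε] ∈ Sh^1(k, A), then there is an exact sequence 0 → ⟨[ε]⟩ → Sh^1(k, A) → Sh^1(k, B) → 0 (exactness at the middle and surjectivity onto Sh^1(k,B)). -/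
/-- Let `Γ` be the absolute Galois group of the global field `k`, with
decomposition subgroups `D v` at the places `v`, and let `0 → A → B → ℤ/m → 0` be an exact
sequence of finite Galois modules with trivial action on `ℤ/m` (encoded by `A = ker π` for
an equivariant surjection `π : B → ℤ/m`). The key input `Sh^1(k, ℤ/m) = 0` (a consequence
of Chebotarev) is taken as hypothesis `hShZ`. Let `[ε] = δ(1)` be represented by the
cocycle `γ ↦ γ•ε − ε` for a lift `ε` of `1`. Then:
(1) every locally trivial `B`-valued cocycle is cohomologous to an `A`-valued one;
(2) if `Sh^1(k,B) = 0`, every locally trivial (as `A`-class) `A`-valued cocycle is,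
    up to an `A`-coboundary, an integer multiple of `δ(1)`;
(3) if `δ(1)` is everywhere locally trivial as an `A`-class, the sequence
    `0 → ⟨[ε]⟩ → Sh^1(k,A) → Sh^1(k,B) → 0` is exact at the middle and surjective. -/
theorem stmt_17 (Γ : Type*) [Group Γ]
    (B : Type*) [AddCommGroup B] [Finite B] [DistribMulAction Γ B]
    (m : ℕ) (π : B →+ ZMod m) (hsurj : Function.Surjective π)
    (hπ : ∀ (γ : Γ) (b : B), π (γ • b) = π b)
    (V : Type*) (D : V → Subgroup Γ)
    (hShZ : ∀ φ : Γ → ZMod m, (∀ γ γ' : Γ, φ (γ * γ') = φ γ + φ γ') →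
      (∀ v : V, ∀ x ∈ D v, φ x = 0) → ∀ γ : Γ, φ γ = 0)
    (ε : B) (hε : π ε = 1) :
    -- (1)
    (∀ ζ : Γ → B, (∀ γ γ' : Γ, ζ (γ * γ') = γ • ζ γ' + ζ γ) →
      (∀ v : V, ∃ b : B, ∀ x ∈ D v, ζ x = x • b - b) →
      ∃ ξ : Γ → B, (∀ γ : Γ, π (ξ γ) = 0) ∧
        (∀ γ γ' : Γ, ξ (γ * γ') = γ • ξ γ' + ξ γ) ∧
        ∃ b : B, ∀ γ : Γ, ζ γ - ξ γ = γ • b - b) ∧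
    -- (2)
    ((∀ ζ : Γ → B, (∀ γ γ' : Γ, ζ (γ * γ') = γ • ζ γ' + ζ γ) →
        (∀ v : V, ∃ b : B, ∀ x ∈ D v, ζ x = x • b - b) →
        ∃ b : B, ∀ γ : Γ, ζ γ = γ • b - b) →
      ∀ ξ : Γ → B, (∀ γ : Γ, π (ξ γ) = 0) →
        (∀ γ γ' : Γ, ξ (γ * γ') = γ • ξ γ' + ξ γ) →
        (∀ v : V, ∃ a : B, π a = 0 ∧ ∀ x ∈ D v, ξ x = x • a - a) →
        ∃ (c : ℤ) (a : B), π a = 0 ∧ ∀ γ : Γ, ξ γ - c • (γ • ε - ε) = γ • a - a) ∧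
    -- (3)
    ((∀ v : V, ∃ a : B, π a = 0 ∧ ∀ x ∈ D v, x • ε - ε = x • a - a) →
      (∀ ξ : Γ → B, (∀ γ : Γ, π (ξ γ) = 0) →
        (∀ γ γ' : Γ, ξ (γ * γ') = γ • ξ γ' + ξ γ) →
        (∀ v : V, ∃ a : B, π a = 0 ∧ ∀ x ∈ D v, ξ x = x • a - a) →
        (∃ b : B, ∀ γ : Γ, ξ γ = γ • b - b) →
        ∃ (c : ℤ) (a : B), π a = 0 ∧ ∀ γ : Γ, ξ γ - c • (γ • ε - ε) = γ • a - a) ∧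
      (∀ ζ : Γ → B, (∀ γ γ' : Γ, ζ (γ * γ') = γ • ζ γ' + ζ γ) →
        (∀ v : V, ∃ b : B, ∀ x ∈ D v, ζ x = x • b - b) →
        ∃ ξ : Γ → B, (∀ γ : Γ, π (ξ γ) = 0) ∧
          (∀ γ γ' : Γ, ξ (γ * γ') = γ • ξ γ' + ξ γ) ∧
          (∀ v : V, ∃ a : B, π a = 0 ∧ ∀ x ∈ D v, ξ x = x • a - a) ∧
          ∃ b : B, ∀ γ : Γ, ζ γ - ξ γ = γ • b - b)) := by
  -- `γ` acts ℤ-linearly: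
  have hsm : ∀ (γ : Γ) (c : ℤ) (b : B), γ • (c • b) = c • (γ • b) := by
    intro γ c b
    exact map_zsmul (DistribMulAction.toAddMonoidHom B γ) c b
  -- Key: a locally (B-)trivial cocycle takes values in A = ker π.
  have key : ∀ ζ : Γ → B, (∀ γ γ' : Γ, ζ (γ * γ') = γ • ζ γ' + ζ γ) →
      (∀ v : V, ∃ b : B, ∀ x ∈ D v, ζ x = x • b - b) →
      ∀ γ : Γ, π (ζ γ) = 0 := by
    intro ζ hcoc hloc
    refine hShZ (fun γ => π (ζ γ)) (fun γ γ' => ?_) (fun v x hx => ?_)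
    · show π (ζ (γ * γ')) = π (ζ γ) + π (ζ γ')
      rw [hcoc, map_add, hπ, add_comm]
    · obtain ⟨b, hb⟩ := hloc v
      show π (ζ x) = 0
      rw [hb x hx, map_sub, hπ, sub_self]
  -- Key 2: an A-valued cocycle that is a B-coboundary is, modulo an A-coboundary,
  -- an integer multiple of δ(1).
  have L2 : ∀ (ξ : Γ → B) (b : B), (∀ γ : Γ, π (ξ γ) = 0) →
      (∀ γ : Γ, ξ γ = γ • b - b) →
      ∃ (c : ℤ) (a : B), π a = 0 ∧ ∀ γ : Γ, ξ γ - c • (γ • ε - ε) = γ • a - a := by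
    intro ξ b hξπ hb
    obtain ⟨c, hc⟩ := ZMod.intCast_surjective (π b)
    refine ⟨c, b - c • ε, ?_, fun γ => ?_⟩
    · rw [map_sub, map_zsmul, hε, zsmul_eq_mul, mul_one, hc, sub_self]
    · rw [hb γ]
      simp only [smul_sub, hsm]
      abel
  refine ⟨fun ζ hcoc hloc => ⟨ζ, key ζ hcoc hloc, hcoc, 0, fun γ => by simp⟩,
    fun hSh ξ hξπ hcoc hloc => ?_, fun hδ => ⟨fun ξ hξπ hcoc hloc hb => ?_,
    fun ζ hcoc hloc => ?_⟩⟩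
  · obtain ⟨b, hb⟩ := hSh ξ hcoc (fun v => (hloc v).imp fun a h => h.2)
    exact L2 ξ b hξπ hb
  · obtain ⟨b, hb⟩ := hb
    exact L2 ξ b hξπ hb
  · refine ⟨ζ, key ζ hcoc hloc, hcoc, fun v => ?_, 0, fun γ => by simp⟩
    obtain ⟨b, hb⟩ := hloc v
    obtain ⟨a', ha'0, ha'⟩ := hδ v
    obtain ⟨c, hc⟩ := ZMod.intCast_surjective (π b)
    refine ⟨b + c • (a' - ε), ?_, fun x hx => ?_⟩
    · rw [map_add, map_zsmul, map_sub, ha'0, hε, zero_sub, zsmul_eq_mul, mul_neg_one,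
        hc, add_neg_cancel]
    · have h := ha' x hx
      have h0 : x • (a' - ε) = a' - ε := by
        rw [smul_sub, ← sub_eq_zero, ← neg_eq_zero]
        rw [← sub_eq_zero] at h
        rw [← h]
        abel
      rw [hb x hx, smul_add, hsm, h0]
      abel
end
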